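/- arXiv:1812.04730 — 7 statements merged into one kernel-verified Lean document; each statement's English description precedes it below -/
import Mathlib

section
/- Let U be unitary on a finite-dimensional Hilbert space, P an orthogonal projection, E = PUP on ran(P). Then for any eigenvalue λ of E with |λ| = 1 and any m ≥ 1, ker(λ - E)^m = ker(λ - E); that is, unimodular eigenvalues of E have no nontrivial Jordan blocks. -/
/-!
`E = P U P` is a contraction. For a contraction `T` and a unit eigenvalue `l` with eigenvector `y`,
`‖T† y - conj l • y‖² = ‖T† y‖² - ‖y‖² ≤ 0`, so `y` is also an eigenvector of `T†` for `conj l`.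
If `(l - T) x = y`, then `‖y‖² = ⟪y, (l - T) x⟫ = ⟪(conj l - T†) y, x⟫ = 0`. Hence
`ker (l - T)² = ker (l - T)`, and the kernels of all higher powers agree with it.
-/

open scoped InnerProductSpace ComplexConjugate

namespace Module.End

theorem ker_pow_eq_ker_of_ker_sq_le {K V : Type*} [DivisionRing K] [AddCommGroup V] [Module K V]
    {f : End K V} (h : LinearMap.ker (f ^ 2) ≤ LinearMap.ker f) {m : ℕ} (hm : 1 ≤ m) :
    LinearMap.ker (f ^ m) = LinearMap.ker f := by
  obtain ⟨n, rfl⟩ := Nat.exists_eq_add_of_le hm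
  have h1 : LinearMap.ker (f ^ 1) = LinearMap.ker (f ^ (1 + 1)) :=
    le_antisymm (LinearMap.ker_le_ker_comp _ _) (by simpa using h)
  simpa using (ker_pow_constant h1 n).symm

end Module.End

namespace LinearMap

variable {𝕜 E : Type*} [RCLike 𝕜] [NormedAddCommGroup E] [InnerProductSpace 𝕜 E]

theorem IsSymmetricProjection.norm_apply_le {P : E →ₗ[𝕜] E} (hP : P.IsSymmetricProjection)
    (x : E) : ‖P x‖ ≤ ‖x‖ := by
  have h : ‖P x‖ ^ 2 ≤ ‖x‖ * ‖P x‖ :=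
    calc ‖P x‖ ^ 2 = RCLike.re ⟪x, P (P x)⟫_𝕜 := by
          rw [← hP.isSymmetric, inner_self_eq_norm_sq]
      _ = RCLike.re ⟪x, P x⟫_𝕜 := by rw [← Module.End.mul_apply, hP.isIdempotentElem.eq]
      _ ≤ ‖x‖ * ‖P x‖ := re_inner_le_norm _ _
  nlinarith [norm_nonneg x, norm_nonneg (P x)]

variable [FiniteDimensional 𝕜 E] {T : E →ₗ[𝕜] E}

theorem norm_adjoint_apply_le (hT : ∀ x, ‖T x‖ ≤ ‖x‖) (y : E) : ‖adjoint T y‖ ≤ ‖y‖ := by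
  have h : ‖adjoint T y‖ ^ 2 ≤ ‖y‖ * ‖adjoint T y‖ :=
    calc ‖adjoint T y‖ ^ 2 = RCLike.re ⟪y, T (adjoint T y)⟫_𝕜 := by
          rw [← adjoint_inner_left, inner_self_eq_norm_sq]
      _ ≤ ‖y‖ * ‖T (adjoint T y)‖ := re_inner_le_norm _ _
      _ ≤ ‖y‖ * ‖adjoint T y‖ := by gcongr; exact hT _
  nlinarith [norm_nonneg y, norm_nonneg (adjoint T y)]

theorem adjoint_apply_eq_conj_smul (hT : ∀ x, ‖T x‖ ≤ ‖x‖) {l : 𝕜} (hl : ‖l‖ = 1) {y : E}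
    (hy : T y = l • y) : adjoint T y = conj l • y := by
  have hll : conj l * l = 1 := by
    rw [RCLike.conj_mul, hl]; simp
  have hre : RCLike.re ⟪adjoint T y, conj l • y⟫_𝕜 = ‖y‖ ^ 2 := by
    rw [inner_smul_right, adjoint_inner_left, hy, inner_smul_right, ← mul_assoc, hll, one_mul,
      inner_self_eq_norm_sq]
  have h : ‖adjoint T y - conj l • y‖ ^ 2 ≤ 0 := by
    rw [@norm_sub_sq 𝕜, hre, norm_smul, RCLike.norm_conj, hl, one_mul]
    nlinarith [norm_adjoint_apply_le hT y, norm_nonneg (adjoint T y)]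
  rw [← sub_eq_zero, ← norm_eq_zero]
  exact pow_eq_zero_iff two_ne_zero |>.mp (le_antisymm h (sq_nonneg _))

theorem ker_sq_smul_one_sub_le_ker (hT : ∀ x, ‖T x‖ ≤ ‖x‖) {l : 𝕜} (hl : ‖l‖ = 1) :
    ker ((l • 1 - T) ^ 2) ≤ ker (l • 1 - T) := by
  intro x hx
  set y := (l • 1 - T) x with hy_def
  have hy : T y = l • y := by
    rw [mem_ker, sq, Module.End.mul_apply, ← hy_def, sub_apply, smul_apply, Module.End.one_apply,
      sub_eq_zero] at hx
    exact hx.symm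
  have : ⟪y, y⟫_𝕜 = 0 := calc
    ⟪y, y⟫_𝕜 = l * ⟪y, x⟫_𝕜 - ⟪adjoint T y, x⟫_𝕜 := by
      rw [adjoint_inner_left, ← inner_smul_right, ← inner_sub_right]; rfl
    _ = 0 := by rw [adjoint_apply_eq_conj_smul hT hl hy, inner_smul_left]; simp
  exact mem_ker.mpr (inner_self_eq_zero.mp this)

end LinearMap

theorem no_jordan_block_for_unimodular_eigenvalue_general
    {H : Type*} [NormedAddCommGroup H] [InnerProductSpace ℂ H] [FiniteDimensional ℂ H]
    (U P : H →ₗ[ℂ] H)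
    (hU : ∀ x y : H, ⟪U x, U y⟫_ℂ = ⟪x, y⟫_ℂ)
    (hP : P ∘ₗ P = P) (hPsa : ∀ x y : H, ⟪P x, y⟫_ℂ = ⟪x, P y⟫_ℂ)
    (l : ℂ) (hl : ‖l‖ = 1) (m : ℕ) (hm : 1 ≤ m) :
    LinearMap.ker ((l • (1 : H →ₗ[ℂ] H) - (P ∘ₗ U ∘ₗ P)) ^ m)
      = LinearMap.ker (l • (1 : H →ₗ[ℂ] H) - (P ∘ₗ U ∘ₗ P)) := by
  have hPproj : P.IsSymmetricProjection := ⟨hP, hPsa⟩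
  have hE : ∀ x, ‖(P ∘ₗ U ∘ₗ P) x‖ ≤ ‖x‖ := fun x =>
    calc ‖P (U (P x))‖ ≤ ‖U (P x)‖ := hPproj.norm_apply_le _
      _ = ‖P x‖ := (U.isometryOfInner hU).norm_map _
      _ ≤ ‖x‖ := hPproj.norm_apply_le x
  exact Module.End.ker_pow_eq_ker_of_ker_sq_le (LinearMap.ker_sq_smul_one_sub_le_ker hE hl) hm

/-- Let `U` be unitary on a finite-dimensional complex Hilbert space, `P` an orthogonal
projection, and `E = P U P`. Unimodular eigenvalues of `E` have no nontrivial Jordan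
blocks: for `‖l‖ = 1` and `m ≥ 1`, `ker (l - E)^m = ker (l - E)`. -/
theorem no_jordan_block_for_unimodular_eigenvalue
    {H : Type*} [NormedAddCommGroup H] [InnerProductSpace ℂ H] [FiniteDimensional ℂ H]
    (U P : H →ₗ[ℂ] H)
    (hU : ∀ x y : H, ⟪U x, U y⟫_ℂ = ⟪x, y⟫_ℂ) (hUsurj : Function.Surjective U)
    (hP : P ∘ₗ P = P) (hPsa : ∀ x y : H, ⟪P x, y⟫_ℂ = ⟪x, P y⟫_ℂ)
    (l : ℂ) (hl : ‖l‖ = 1) (m : ℕ) (hm : 1 ≤ m) :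
    LinearMap.ker ((l • (1 : H →ₗ[ℂ] H) - (P ∘ₗ U ∘ₗ P)) ^ m)
      = LinearMap.ker (l • (1 : H →ₗ[ℂ] H) - (P ∘ₗ U ∘ₗ P)) :=
  no_jordan_block_for_unimodular_eigenvalue_general U P hU hP hPsa l hl m hm
end

section
/- Let U be unitary on a finite-dimensional Hilbert space, P an orthogonal projection, E = PUP on ran(P). If Eφ = λφ with |λ| = 1 and Eψ generalized-eigenvector of E for an eigenvalue μ with |μ| < 1 (i.e., (μ - E)^m ψ = 0 for some m), then ⟨ψ, φ⟩ = 0. Hence the center generalized eigenspace of E is orthogonal to the stable generalized eigenspace. -/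
open scoped InnerProductSpace

/-!
An eigenvector `φ` of `E = P U P` for a unimodular eigenvalue `l` is already an eigenvector of
`U`: `‖P (U φ)‖ = ‖l • φ‖ = ‖U φ‖`, and an orthogonal projection preserves the norm only of
vectors in its range. Then `⟪E x, φ⟫ = conj l * ⟪x, φ⟫` for all `x`, i.e. `φ` is an eigenvector
of `E†` for `conj l`, hence `⟪(μ - E) ^ m ψ, φ⟫ = (conj μ - conj l) ^ m * ⟪ψ, φ⟫`, and the left
side vanishes while `μ ≠ l`.
-/

open ComplexConjugate

section

variable {𝕜 E : Type*} [RCLike 𝕜] [NormedAddCommGroup E] [InnerProductSpace 𝕜 E]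

theorem LinearMap.IsSymmetricProjection.apply_eq_self_of_norm_apply_eq {p : E →ₗ[𝕜] E}
    (hp : p.IsSymmetricProjection) {v : E} (hv : ‖p v‖ = ‖v‖) : p v = v := by
  obtain ⟨_, hp_eq⟩ := isSymmetricProjection_iff_eq_coe_starProjection_range.mp hp
  rw [hp_eq] at hv ⊢
  exact Submodule.starProjection_eq_self_iff.mpr
    ((Submodule.mem_iff_norm_starProjection _ v).mpr hv)

theorem LinearIsometry.apply_eq_of_isSymmetricProjection_apply_eq (U : E →ₗᵢ[𝕜] E)
    {p : E →ₗ[𝕜] E} (hp : p.IsSymmetricProjection) {l : 𝕜} (hl : ‖l‖ = 1) {φ : E}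
    (hφ : p (U φ) = l • φ) : U φ = l • φ := by
  rw [← hφ]
  refine (hp.apply_eq_self_of_norm_apply_eq ?_).symm
  rw [hφ, norm_smul, hl, one_mul, U.norm_map]

theorem LinearIsometry.inner_apply_left_eq_of_apply_eq (U : E →ₗᵢ[𝕜] E) {l : 𝕜} (hl : ‖l‖ = 1)
    {φ : E} (hφ : U φ = l • φ) (x : E) : ⟪U x, φ⟫_𝕜 = conj l * ⟪x, φ⟫_𝕜 := by
  have hφ' : φ = conj l • U φ := by
    rw [hφ, smul_smul, RCLike.conj_mul, hl]
    simp
  conv_lhs => rw [hφ']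
  rw [inner_smul_right, U.inner_map_map]

theorem inner_pow_smul_one_sub_apply_left {T : E →ₗ[𝕜] E} {φ : E} {c : 𝕜}
    (hT : ∀ x, ⟪T x, φ⟫_𝕜 = c * ⟪x, φ⟫_𝕜) (μ : 𝕜) (n : ℕ) (x : E) :
    ⟪((μ • 1 - T) ^ n) x, φ⟫_𝕜 = (conj μ - c) ^ n * ⟪x, φ⟫_𝕜 := by
  induction n generalizing x with
  | zero => simp
  | succ n ih =>
    rw [pow_succ, Module.End.mul_apply, ih, LinearMap.sub_apply, inner_sub_left,
      LinearMap.smul_apply, Module.End.one_apply, inner_smul_left, hT]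
    ring

theorem inner_eq_zero_of_pow_smul_one_sub_apply_eq_zero {T : E →ₗ[𝕜] E} {φ : E} {c : 𝕜}
    (hT : ∀ x, ⟪T x, φ⟫_𝕜 = c * ⟪x, φ⟫_𝕜) {μ : 𝕜} (hμ : conj μ ≠ c) {ψ : E} {n : ℕ}
    (hψ : ((μ • 1 - T) ^ n) ψ = 0) : ⟪ψ, φ⟫_𝕜 = 0 := by
  have h := inner_pow_smul_one_sub_apply_left hT μ n ψ
  rw [hψ, inner_zero_left, eq_comm] at h
  exact (mul_eq_zero.mp h).resolve_left (pow_ne_zero n (sub_ne_zero.mpr hμ))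

end

theorem center_orthogonal_to_stable_general
    {H : Type*} [NormedAddCommGroup H] [InnerProductSpace ℂ H]
    (U P : H →ₗ[ℂ] H)
    (hU : ∀ x y : H, ⟪U x, U y⟫_ℂ = ⟪x, y⟫_ℂ)
    (hP : P ∘ₗ P = P) (hPsa : ∀ x y : H, ⟪P x, y⟫_ℂ = ⟪x, P y⟫_ℂ)
    (l μ : ℂ) (hl : ‖l‖ = 1) (hμ : ‖μ‖ < 1)
    (φ : H) (hran : P φ = φ) (hφ : (P ∘ₗ U ∘ₗ P) φ = l • φ)
    (ψ : H) (m : ℕ)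
    (hψ : ((μ • (1 : H →ₗ[ℂ] H) - (P ∘ₗ U ∘ₗ P)) ^ m) ψ = 0) :
    ⟪ψ, φ⟫_ℂ = 0 := by
  let V : H →ₗᵢ[ℂ] H := U.isometryOfInner hU
  have hPUφ : P (U φ) = l • φ := by simpa [hran] using hφ
  have hUφ : V φ = l • φ := V.apply_eq_of_isSymmetricProjection_apply_eq ⟨hP, hPsa⟩ hl hPUφ
  have hE : ∀ x, ⟪(P ∘ₗ U ∘ₗ P) x, φ⟫_ℂ = conj l * ⟪x, φ⟫_ℂ := fun x => by
    rw [LinearMap.comp_apply, hPsa, hran, LinearMap.comp_apply,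
      show U (P x) = V (P x) from rfl, V.inner_apply_left_eq_of_apply_eq hl hUφ, hPsa, hran]
  refine inner_eq_zero_of_pow_smul_one_sub_apply_eq_zero hE ?_ hψ
  intro hμl
  rw [(starRingEnd ℂ).injective hμl, hl] at hμ
  exact lt_irrefl 1 hμ

/-- Let `U` be unitary on a finite-dimensional complex Hilbert space, `P` an orthogonal
projection, and `E = P U P`. Every eigenvector `φ` of `E` for a unimodular eigenvalue `l`
is orthogonal to every generalized eigenvector `ψ` of `E` for an eigenvalue `μ` with
`‖μ‖ < 1`: the center generalized eigenspace is orthogonal to the stable one. -/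
theorem center_orthogonal_to_stable
    {H : Type*} [NormedAddCommGroup H] [InnerProductSpace ℂ H] [FiniteDimensional ℂ H]
    (U P : H →ₗ[ℂ] H)
    (hU : ∀ x y : H, ⟪U x, U y⟫_ℂ = ⟪x, y⟫_ℂ) (hUsurj : Function.Surjective U)
    (hP : P ∘ₗ P = P) (hPsa : ∀ x y : H, ⟪P x, y⟫_ℂ = ⟪x, P y⟫_ℂ)
    (l μ : ℂ) (hl : ‖l‖ = 1) (hμ : ‖μ‖ < 1)
    (φ : H) (hran : P φ = φ) (hφ : (P ∘ₗ U ∘ₗ P) φ = l • φ)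
    (ψ : H) (m : ℕ)
    (hψ : ((μ • (1 : H →ₗ[ℂ] H) - (P ∘ₗ U ∘ₗ P)) ^ m) ψ = 0) :
    ⟪ψ, φ⟫_ℂ = 0 :=
  center_orthogonal_to_stable_general U P hU hP hPsa l μ hl hμ φ hran hφ ψ m hψ
end

section
/- Let U be unitary on a Hilbert space, P an orthogonal projection, E = PUP on ran(P), and ρ = P U Ψ₀ for some vector Ψ₀ with P Ψ₀ = 0. If Eφ = λφ with |λ| = 1, then ⟨ρ, φ⟩ = 0; that is, the external source ρ is orthogonal to the center eigenspace of E. -/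
open scoped InnerProductSpace

/-- Let `U` be unitary on a complex Hilbert space, `P` an orthogonal projection,
`Ψ₀` supported on the orthogonal complement of the range of `P` (i.e. `P Ψ₀ = 0`) and
`ρ = P U Ψ₀` the external source. If `φ` is an eigenvector of `E = P U P` in the range of
`P` with unimodular eigenvalue `l`, then `⟪ρ, φ⟫ = 0`. -/
theorem external_source_orthogonal_to_center
    {H : Type*} [NormedAddCommGroup H] [InnerProductSpace ℂ H]
    (U P : H →ₗ[ℂ] H)
    (hU : ∀ x y : H, ⟪U x, U y⟫_ℂ = ⟪x, y⟫_ℂ) (hUsurj : Function.Surjective U)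
    (hP : P ∘ₗ P = P) (hPsa : ∀ x y : H, ⟪P x, y⟫_ℂ = ⟪x, P y⟫_ℂ)
    (Ψ₀ : H) (hΨ₀ : P Ψ₀ = 0)
    (l : ℂ) (hl : ‖l‖ = 1) (φ : H) (hran : P φ = φ)
    (heig : (P ∘ₗ U ∘ₗ P) φ = l • φ) :
    ⟪P (U Ψ₀), φ⟫_ℂ = 0 := by
  have hPP : ∀ x : H, P (P x) = P x := fun x => congrFun (congrArg DFunLike.coe hP) x
  have hPU : P (U φ) = l • φ := by
    have := heig
    simp only [LinearMap.comp_apply, hran] at this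
    exact this
  -- Step 1: U φ = P (U φ)
  set v := U φ with hv
  have hinnerPv : ⟪v, P v⟫_ℂ = ⟪v, v⟫_ℂ := by
    have h1 : ⟪P v, P v⟫_ℂ = ⟪v, P v⟫_ℂ := by rw [hPsa, hPP]
    have h2 : (⟪P v, P v⟫_ℂ : ℂ) = (‖P v‖ : ℂ)^2 := by
      rw [inner_self_eq_norm_sq_to_K]; norm_num
    have h3 : (⟪v, v⟫_ℂ : ℂ) = (‖v‖ : ℂ)^2 := by
      rw [inner_self_eq_norm_sq_to_K]; norm_num
    have hnv : ‖v‖ = ‖φ‖ := by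
      have := hU φ φ
      have h4 : (‖v‖ : ℂ)^2 = (‖φ‖ : ℂ)^2 := by
        rw [← h3, this, inner_self_eq_norm_sq_to_K]; norm_num
      have h5 : ‖v‖^2 = ‖φ‖^2 := by exact_mod_cast h4
      nlinarith [norm_nonneg v, norm_nonneg φ]
    have hnPv : ‖P v‖ = ‖φ‖ := by
      rw [hPU, norm_smul, hl, one_mul]
    rw [← h1, h2, h3, hnv, hnPv]
  have hveq : v = P v := by
    have : ⟪v - P v, v - P v⟫_ℂ = 0 := by
      have hPvv : ⟪P v, v⟫_ℂ = ⟪v, P v⟫_ℂ := by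
        rw [hPsa]
      have hPvPv : ⟪P v, P v⟫_ℂ = ⟪v, P v⟫_ℂ := by rw [hPsa, hPP]
      rw [inner_sub_sub_self, hPvv, hPvPv, hinnerPv]
      ring
    exact sub_eq_zero.mp (inner_self_eq_zero.mp this)
  have hUphi : U φ = l • φ := hveq.trans hPU
  have hl0 : l ≠ 0 := by
    intro h; rw [h] at hl; simp at hl
  have key : l * ⟪U Ψ₀, φ⟫_ℂ = 0 := by
    calc l * ⟪U Ψ₀, φ⟫_ℂ = ⟪U Ψ₀, l • φ⟫_ℂ := by rw [inner_smul_right]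
    _ = ⟪U Ψ₀, U φ⟫_ℂ := by rw [hUphi]
    _ = ⟪Ψ₀, φ⟫_ℂ := hU _ _
    _ = ⟪Ψ₀, P φ⟫_ℂ := by rw [hran]
    _ = ⟪P Ψ₀, φ⟫_ℂ := (hPsa _ _).symm
    _ = 0 := by rw [hΨ₀, inner_zero_left]
  have : ⟪U Ψ₀, φ⟫_ℂ = 0 := by
    rcases mul_eq_zero.mp key with h | h
    · exact absurd h hl0
    · exact h
  rw [hPsa, hran, this]
end

section
/- For a Jordan block J(λ,k) with |λ| < 1 and any complex number z with |z| = 1, the series Σ_{ℓ=0}^∞ (z J(λ,k))^ℓ converges, and equals the upper triangular matrix whose (i,j) entry (for i ≤ j) is z^{-1} q^{j-i+1}, where q = z/(1 - zλ). -/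
/-- The `k`-dimensional Jordan block with eigenvalue `l`. -/
def jordanBlock (l : ℂ) (k : ℕ) : Matrix (Fin k) (Fin k) ℂ :=
  fun i j => if i = j then l else if (i : ℕ) + 1 = (j : ℕ) then 1 else 0

/-!
Write `J(l,k) = l • 1 + N` with `N` the nilpotent shift, whose powers are
`(N ^ d) i j = [i + d = j]`. The binomial theorem then gives
`(J ^ m) i j = C(m, j - i) l ^ (m - (j - i))` for `i ≤ j`, so on
the `d`-th superdiagonal the series is the negative binomial series
`∑ₘ zᵐ C(m, d) l ^ (m - d) = z ^ d / (1 - z l) ^ (d + 1) = z⁻¹ q ^ (d + 1)`.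
-/

open Finset

lemma jordanBlock_zero_apply (k : ℕ) (i j : Fin k) :
    jordanBlock 0 k i j = if (i : ℕ) + 1 = j then 1 else 0 := by
  unfold jordanBlock
  split_ifs <;> simp_all

lemma jordanBlock_eq_smul_one_add (l : ℂ) (k : ℕ) :
    jordanBlock l k = l • 1 + jordanBlock 0 k := by
  ext i j
  by_cases h : i = j
  · simp [h, jordanBlock]
  · simp [h, jordanBlock, Matrix.one_apply_ne h]

lemma jordanBlock_zero_pow_apply (k d : ℕ) (i j : Fin k) :
    (jordanBlock 0 k ^ d) i j = if (i : ℕ) + d = j then 1 else 0 := by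
  induction d generalizing j with
  | zero => simp [Matrix.one_apply, Fin.ext_iff]
  | succ d ih =>
    simp only [pow_succ, Matrix.mul_apply, ih, jordanBlock_zero_apply, ite_mul, one_mul, zero_mul]
    rw [Fin.sum_univ_eq_sum_range (fun p => if (i : ℕ) + d = p then
      (if p + 1 = (j : ℕ) then (1 : ℂ) else 0) else 0), sum_ite_eq]
    have := j.isLt
    simp only [mem_range]
    split_ifs <;> first | rfl | omega

lemma jordanBlock_pow_apply (l : ℂ) (k m : ℕ) (i j : Fin k) :
    (jordanBlock l k ^ m) i j =
      if (i : ℕ) ≤ j then (m.choose (j - i) : ℂ) * l ^ (m - (j - i)) else 0 := by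
  have hcomm : Commute (jordanBlock 0 k) (l • 1) := (Commute.one_right _).smul_right l
  rw [jordanBlock_eq_smul_one_add, add_comm, hcomm.add_pow, Matrix.sum_apply]
  simp only [smul_pow, one_pow, Matrix.mul_smul, Matrix.mul_one, ← nsmul_eq_mul', Matrix.smul_apply,
    jordanBlock_zero_pow_apply]
  by_cases hij : (i : ℕ) ≤ j
  · have hx (x : ℕ) : (i : ℕ) + x = j ↔ j - i = x := by omega
    simp only [hx, if_pos hij, nsmul_eq_mul, smul_eq_mul, mul_ite, mul_one, mul_zero, sum_ite_eq,
      mem_range]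
    split_ifs with hd
    · rfl
    · simp [Nat.choose_eq_zero_of_lt (by omega : m < j - i)]
  · have hx (x : ℕ) : (i : ℕ) + x ≠ j := by omega
    simp [hx, hij]

lemma hasSum_pow_mul_choose_mul_pow_sub {𝕜 : Type*} [NormedField 𝕜] [CompleteSpace 𝕜] (d : ℕ)
    {z l : 𝕜} (hzl : ‖z * l‖ < 1) :
    HasSum (fun m => z ^ m * ((m.choose d : 𝕜) * l ^ (m - d))) (z ^ d / (1 - z * l) ^ (d + 1)) := by
  have hbelow : ∑ m ∈ range d, z ^ m * ((m.choose d : 𝕜) * l ^ (m - d)) = 0 :=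
    sum_eq_zero fun m hm => by simp [Nat.choose_eq_zero_of_lt (mem_range.mp hm)]
  have hshifted : HasSum (fun m => z ^ (m + d) * (((m + d).choose d : 𝕜) * l ^ (m + d - d)))
      (z ^ d / (1 - z * l) ^ (d + 1)) := by
    rw [div_eq_mul_one_div]
    refine ((hasSum_choose_mul_geometric_of_norm_lt_one d hzl).mul_left (z ^ d)).congr_fun
      fun m => ?_
    rw [Nat.add_sub_cancel, mul_pow, pow_add]
    ring
  rw [← add_zero (_ / _), ← hbelow]
  exact (hasSum_nat_add_iff d).mp hshifted

lemma hasSum_smul_jordanBlock_pow {z l : ℂ} (k : ℕ) (hzl : ‖z * l‖ < 1) :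
    HasSum (fun m => (z • jordanBlock l k) ^ m)
      (fun i j => if (i : ℕ) ≤ j then z ^ ((j : ℕ) - i) / (1 - z * l) ^ ((j : ℕ) - i + 1)
        else 0) := by
  refine Pi.hasSum.mpr fun i => Pi.hasSum.mpr fun j => ?_
  simp only [smul_pow, Matrix.smul_apply, jordanBlock_pow_apply, smul_eq_mul]
  split_ifs
  · exact hasSum_pow_mul_choose_mul_pow_sub _ hzl
  · simp [hasSum_zero]

/-- For `‖l‖ < 1` and unimodular `z`, the Neumann series `Σ_{ℓ} (z J(l,k))^ℓ` converges
to the upper triangular matrix with `(i,j)` entry `z⁻¹ q^{j-i+1}` (for `i ≤ j`), where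
`q = z / (1 - z l)`. -/
theorem jordan_block_geometric_series (l z : ℂ) (k : ℕ)
    (hl : ‖l‖ < 1) (hz : ‖z‖ = 1) :
    Filter.Tendsto (fun N => ∑ m ∈ Finset.range N, (z • jordanBlock l k) ^ m)
      Filter.atTop
      (nhds (fun i j => if (i : ℕ) ≤ (j : ℕ) then
        z⁻¹ * (z / (1 - z * l)) ^ ((j : ℕ) - (i : ℕ) + 1) else 0)) := by
  have hzl : ‖z * l‖ < 1 := by rwa [norm_mul, hz, one_mul]
  have hz0 : z ≠ 0 := norm_ne_zero_iff.mp (by rw [hz]; exact one_ne_zero)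
  have hq (d : ℕ) : z⁻¹ * (z / (1 - z * l)) ^ (d + 1) = z ^ d / (1 - z * l) ^ (d + 1) := by
    rw [div_pow, pow_succ', ← mul_div_assoc, inv_mul_cancel_left₀ hz0]
  simp only [hq]
  exact (hasSum_smul_jordanBlock_pow k hzl).tendsto_sum_nat
end

section
/- With K, S, D, T as above and E := S(2K*K - I) on ℂ^{A₀}, the 2|V₀|-column matrix L = [K* , SK*] satisfies the intertwining relation E L = L E_G, where E_G is the 2|V₀| × 2|V₀| block matrix with blocks [[0, -I],[2D - I, 2T]]. -/
open Matrix

variable {V : Type*} [Fintype V] [DecidableEq V]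

/-- The symmetric arc set of a simple graph: ordered pairs of adjacent vertices. -/
abbrev SimpleGraph.Arc (G : SimpleGraph V) [DecidableRel G.Adj] :=
  {p : V × V // G.Adj p.1 p.2}

/-- The weighted terminal-incidence matrix `K`, `K_{u,a} = 1/√(d̃ u)` if `t(a) = u`. -/
noncomputable def Kmat (G : SimpleGraph V) [DecidableRel G.Adj] (dt : V → ℕ) :
    Matrix V G.Arc ℝ :=
  fun u a => if a.1.2 = u then 1 / Real.sqrt (dt u) else 0

/-- The arc-reversal matrix `S`, `(S ψ)(a) = ψ(ā)`. -/
def Smat (G : SimpleGraph V) [DecidableRel G.Adj] : Matrix G.Arc G.Arc ℝ :=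
  fun a b => if b.1 = (a.1.2, a.1.1) then 1 else 0

/-- The diagonal matrix `D` with entries `d(u)/d̃(u)`. -/
noncomputable def Dmat (G : SimpleGraph V) [DecidableRel G.Adj] (dt : V → ℕ) :
    Matrix V V ℝ :=
  Matrix.diagonal fun u => (G.degree u : ℝ) / (dt u)

/-- The Dirichlet random-walk matrix `T`, `T_{u,v} = 1/√(d̃(u) d̃(v))` for `u ~ v`. -/
noncomputable def Tmat (G : SimpleGraph V) [DecidableRel G.Adj] (dt : V → ℕ) :
    Matrix V V ℝ :=
  fun u v => if G.Adj u v then 1 / Real.sqrt ((dt u : ℝ) * (dt v : ℝ)) else 0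

/-! Factor `K = diag(d̃^{-1/2}) H` through the head-incidence matrix `H`. Since `H Hᵀ` is the
degree matrix, `K Kᵀ = D`; since `S Hᵀ` is the transposed tail-incidence matrix and `H` times
that is the adjacency matrix, `K S Kᵀ = T`. The intertwining relation is then a formal identity,
valid for any `S` with `S² = 1`. -/

namespace Matrix

variable {m n R : Type*} [Fintype m] [Fintype n] [DecidableEq m] [DecidableEq n] [CommRing R]

theorem grover_fromCols_intertwining (M : Matrix n m R) (N : Matrix m n R) (S : Matrix m m R)
    (hS : S * S = 1) :
    (S * ((2 : R) • (N * M) - 1)) * fromCols N (S * N)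
      = fromCols N (S * N) *
          fromBlocks 0 (-1) ((2 : R) • (M * N) - 1) ((2 : R) • (M * (S * N))) := by
  rw [mul_fromCols]
  -- the product on the right elaborates with the defeq `CStarMatrix` multiplication instance
  erw [fromCols_mul_fromBlocks]
  rw [fromCols_ext_iff]
  constructor
  · simp only [Matrix.mul_zero, zero_add, Matrix.mul_assoc, Matrix.sub_mul, Matrix.mul_sub,
      Matrix.smul_mul, Matrix.mul_smul, Matrix.mul_one]
  · simp only [Matrix.mul_neg, Matrix.mul_one, Matrix.sub_mul, Matrix.mul_sub, Matrix.smul_mul,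
      Matrix.mul_smul, Matrix.mul_assoc]
    rw [← Matrix.mul_assoc S S, hS, Matrix.one_mul, sub_eq_neg_add]

end Matrix

namespace SimpleGraph

open Finset

variable (G : SimpleGraph V) [DecidableRel G.Adj]

section Reversal

omit [Fintype V] [DecidableEq V]

def Arc.rev (a : G.Arc) : G.Arc := ⟨(a.1.2, a.1.1), a.2.symm⟩

@[simp]
theorem Arc.rev_rev (a : G.Arc) : Arc.rev G (Arc.rev G a) = a := rfl

end Reversal

omit [Fintype V] in
theorem Smat_apply (a b : G.Arc) : Smat G a b = if b = Arc.rev G a then 1 else 0 := by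
  simp only [Smat, Arc.rev, Subtype.ext_iff]

theorem Smat_mul_apply {n : Type*} (M : Matrix G.Arc n ℝ) (a : G.Arc) (j : n) :
    (Smat G * M) a j = M (Arc.rev G a) j := by
  simp [Matrix.mul_apply, Smat_apply]

theorem Smat_mul_Smat : Smat G * Smat G = 1 := by
  ext a b
  simp [Smat_mul_apply, Smat_apply, Matrix.one_apply, eq_comm]

theorem card_arc_snd_eq_degree (u : V) : #{a : G.Arc | a.1.2 = u} = G.degree u := by
  rw [← card_neighborFinset_eq_degree]
  refine Finset.card_bij (fun a _ => a.1.1) ?_ ?_ ?_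
  · intro a ha
    simp only [Finset.mem_filter, Finset.mem_univ, true_and] at ha
    simpa [ha] using a.2.symm
  · intro a ha b hb hab
    simp only [Finset.mem_filter, Finset.mem_univ, true_and] at ha hb
    exact Subtype.ext (Prod.ext hab (ha.trans hb.symm))
  · intro x hx
    exact ⟨⟨(x, u), ((G.mem_neighborFinset u x).1 hx).symm⟩, by simp⟩

variable (R : Type*) [Semiring R]

def headIncidence : Matrix V G.Arc R := fun u a => if a.1.2 = u then 1 else 0

def tailIncidence : Matrix V G.Arc R := fun u a => if a.1.1 = u then 1 else 0

theorem headIncidence_mul_transpose :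
    headIncidence G R * (headIncidence G R)ᵀ = diagonal fun u => (G.degree u : R) := by
  ext u v
  simp only [Matrix.mul_apply, Matrix.transpose_apply, headIncidence, ite_zero_mul_ite_zero,
    mul_one]
  rcases eq_or_ne u v with rfl | huv
  · simp [Finset.sum_boole, card_arc_snd_eq_degree]
  · rw [diagonal_apply_ne _ huv]
    exact Finset.sum_eq_zero fun a _ => if_neg fun h => huv (h.1.symm.trans h.2)

theorem headIncidence_mul_tailIncidence_transpose :
    headIncidence G R * (tailIncidence G R)ᵀ = G.adjMatrix R := by
  ext u v
  simp only [Matrix.mul_apply, Matrix.transpose_apply, headIncidence, tailIncidence,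
    ite_zero_mul_ite_zero, mul_one, adjMatrix_apply]
  by_cases huv : G.Adj u v
  · have hiff (a : G.Arc) : (a.1.2 = u ∧ a.1.1 = v) ↔ a = ⟨(v, u), huv.symm⟩ := by
      simp [Subtype.ext_iff, Prod.ext_iff, and_comm]
    simp [hiff, huv]
  · refine (Finset.sum_eq_zero fun a _ => if_neg ?_).trans (if_neg huv).symm
    rintro ⟨rfl, rfl⟩
    exact huv a.2.symm

theorem Smat_mul_headIncidence_transpose :
    Smat G * (headIncidence G ℝ)ᵀ = (tailIncidence G ℝ)ᵀ := by
  ext a u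
  exact Smat_mul_apply G _ a u

theorem Kmat_eq_diagonal_mul_headIncidence (dt : V → ℕ) :
    Kmat G dt = diagonal (fun u => 1 / √(dt u : ℝ)) * headIncidence G ℝ := by
  ext u a
  simp [Kmat, headIncidence, diagonal_mul]

theorem Kmat_mul_transpose (dt : V → ℕ) : Kmat G dt * (Kmat G dt)ᵀ = Dmat G dt := by
  rw [Kmat_eq_diagonal_mul_headIncidence, transpose_mul, diagonal_transpose, Matrix.mul_assoc,
    ← Matrix.mul_assoc (headIncidence G ℝ), headIncidence_mul_transpose, diagonal_mul_diagonal,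
    diagonal_mul_diagonal, Dmat]
  congr 1
  funext u
  rw [mul_left_comm, one_div_mul_one_div, Real.mul_self_sqrt (Nat.cast_nonneg _),
    mul_one_div]

theorem Kmat_mul_Smat_mul_transpose (dt : V → ℕ) :
    Kmat G dt * (Smat G * (Kmat G dt)ᵀ) = Tmat G dt := by
  rw [Kmat_eq_diagonal_mul_headIncidence, transpose_mul, diagonal_transpose,
    ← Matrix.mul_assoc (Smat G), Smat_mul_headIncidence_transpose, Matrix.mul_assoc,
    ← Matrix.mul_assoc (headIncidence G ℝ), headIncidence_mul_tailIncidence_transpose]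
  ext u v
  by_cases huv : G.Adj u v
  · simp [diagonal_mul, mul_diagonal, Tmat, huv, Real.sqrt_mul (Nat.cast_nonneg _), mul_comm]
  · simp [diagonal_mul, mul_diagonal, Tmat, huv]

end SimpleGraph

theorem grover_intertwining_general (G : SimpleGraph V) [DecidableRel G.Adj] (dt : V → ℕ) :
    (Smat G * ((2 : ℝ) • ((Kmat G dt).transpose * Kmat G dt) - 1)) *
        Matrix.fromCols (Kmat G dt).transpose (Smat G * (Kmat G dt).transpose)
      = Matrix.fromCols (Kmat G dt).transpose (Smat G * (Kmat G dt).transpose) *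
          Matrix.fromBlocks 0 (-1) ((2 : ℝ) • Dmat G dt - 1) ((2 : ℝ) • Tmat G dt) := by
  rw [← G.Kmat_mul_transpose, ← G.Kmat_mul_Smat_mul_transpose]
  exact Matrix.grover_fromCols_intertwining _ _ _ G.Smat_mul_Smat

/-- The Grover-type evolution `E = S(2KᵀK − 1)` intertwines with the block matrix
`E_G = [[0, −1],[2D − 1, 2T]]` through `L = [Kᵀ, SKᵀ]`: `E L = L E_G`. -/
theorem grover_intertwining (G : SimpleGraph V) [DecidableRel G.Adj] (dt : V → ℕ)
    (hconn : G.Connected) (hle : ∀ u, G.degree u ≤ dt u) (hbd : ∃ u, G.degree u < dt u) :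
    (Smat G * ((2 : ℝ) • ((Kmat G dt).transpose * Kmat G dt) - 1)) *
        Matrix.fromCols (Kmat G dt).transpose (Smat G * (Kmat G dt).transpose)
      = Matrix.fromCols (Kmat G dt).transpose (Smat G * (Kmat G dt).transpose) *
          Matrix.fromBlocks 0 (-1) ((2 : ℝ) • Dmat G dt - 1) ((2 : ℝ) • Tmat G dt) :=
  grover_intertwining_general G dt
end

section
/- The orthogonal complement ℒ^⊥ of ℒ = ran(K*) + ran(SK*) satisfies ℒ^⊥ = (ker(S+1) ∩ ker K) ⊕ (ker(S−1) ∩ ker K), and E = S(2K*K − I) acts on these two summands as +1 and −1 respectively; in particular ℒ^⊥ is E-invariant and E restricted to ℒ^⊥ is a self-adjoint unitary. -/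
/-! Since `(range T)ᗮ = ker T*` and `S` is self-adjoint, `ℒᗮ = ker K ∩ ker (K S)`. This subspace is
invariant under the involution `S`, so `ψ = ½(ψ - Sψ) + ½(ψ + Sψ)` splits it into its parts in the
`∓1`-eigenspaces of `S`. On `ker K` the evolution `E = S(2K*K - 1)` is just `-S`, which is a
self-adjoint involution preserving `ℒᗮ`. -/

open Matrix

variable {V : Type*} [Fintype V] [DecidableEq V]

theorem Submodule.map_eq_self_of_involutive {R M : Type*} [Semiring R] [AddCommMonoid M]
    [Module R M] {W : Submodule R M} {f : M →ₗ[R] M} (hmaps : ∀ x ∈ W, f x ∈ W)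
    (hinv : ∀ x ∈ W, f (f x) = x) : W.map f = W := by
  refine le_antisymm ?_ fun x hx => ⟨f x, hmaps x hx, hinv x hx⟩
  rintro _ ⟨x, hx, rfl⟩
  exact hmaps x hx

namespace LinearMap

section Involution

variable {R M N : Type*} [CommRing R] [AddCommGroup M] [Module R M] [AddCommGroup N] [Module R N]

theorem apply_eq_neg_of_mem_ker_add_one {S : Module.End R M} {ψ : M} (h : ψ ∈ ker (S + 1)) :
    S ψ = -ψ :=
  eq_neg_of_add_eq_zero_left h

theorem apply_eq_self_of_mem_ker_sub_one {S : Module.End R M} {ψ : M} (h : ψ ∈ ker (S - 1)) :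
    S ψ = ψ :=
  sub_eq_zero.1 h

theorem apply_mem_ker_inf_ker_comp (K : M →ₗ[R] N) {S : Module.End R M} (hS : S * S = 1)
    {ψ : M} (hψ : ψ ∈ ker K ⊓ ker (K ∘ₗ S)) : S ψ ∈ ker K ⊓ ker (K ∘ₗ S) := by
  obtain ⟨hK, hKS⟩ := hψ
  refine ⟨hKS, ?_⟩
  simpa only [SetLike.mem_coe, mem_ker, comp_apply, ← Module.End.mul_apply, hS,
    Module.End.one_apply] using hK

theorem ker_inf_ker_comp_eq_sup_eigen [Invertible (2 : R)] (K : M →ₗ[R] N)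
    {S : Module.End R M} (hS : S * S = 1) :
    ker K ⊓ ker (K ∘ₗ S) = (ker (S + 1) ⊓ ker K) ⊔ (ker (S - 1) ⊓ ker K) := by
  have hSS (ψ : M) : S (S ψ) = ψ := congr($hS ψ)
  refine le_antisymm ?_ (sup_le ?_ ?_)
  · rintro ψ ⟨hK, hKS⟩
    simp only [SetLike.mem_coe, mem_ker, comp_apply] at hK hKS
    have hsum : (⅟2 : R) • (ψ - S ψ) + (⅟2 : R) • (ψ + S ψ) = ψ := by
      rw [← smul_add, show ψ - S ψ + (ψ + S ψ) = (2 : R) • ψ by module, smul_smul,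
        invOf_mul_self, one_smul]
    refine Submodule.mem_sup.2 ⟨_, ⟨?_, ?_⟩, _, ⟨?_, ?_⟩, hsum⟩
    all_goals simp only [SetLike.mem_coe, mem_ker, add_apply, sub_apply, Module.End.one_apply,
      map_smul, map_add, map_sub, hSS, hK, hKS, sub_zero, add_zero, smul_zero]
    all_goals module
  all_goals
    rintro ψ ⟨hSψ, hK⟩
    refine ⟨hK, ?_⟩
    simp only [SetLike.mem_coe, mem_ker, comp_apply] at hK ⊢
  · rw [apply_eq_neg_of_mem_ker_add_one hSψ, map_neg, hK, neg_zero]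
  · rw [apply_eq_self_of_mem_ker_sub_one hSψ, hK]

theorem comp_smul_comp_sub_one_apply_of_apply_eq_zero (S : Module.End R M) (C : N →ₗ[R] M)
    (c : R) {K : M →ₗ[R] N} {ψ : M} (hψ : K ψ = 0) : (S ∘ₗ (c • (C ∘ₗ K) - 1)) ψ = -S ψ := by
  simp [hψ]

end Involution

section InnerProduct

variable {𝕜 H F : Type*} [RCLike 𝕜] [NormedAddCommGroup H] [InnerProductSpace 𝕜 H]
  [NormedAddCommGroup F] [InnerProductSpace 𝕜 F] [FiniteDimensional 𝕜 H] [FiniteDimensional 𝕜 F]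

theorem orthogonal_range_adjoint_sup_range_comp_adjoint (K : H →ₗ[𝕜] F) {S : H →ₗ[𝕜] H}
    (hS : S.IsSymmetric) :
    (range (adjoint K) ⊔ range (S ∘ₗ adjoint K))ᗮ = ker K ⊓ ker (K ∘ₗ S) := by
  rw [← Submodule.inf_orthogonal, orthogonal_range, orthogonal_range, adjoint_comp,
    adjoint_adjoint, hS.adjoint_eq]

end InnerProduct

end LinearMap

namespace Matrix

variable {𝕜 l m n : Type*} [RCLike 𝕜] [Fintype l] [Fintype m] [Fintype n] [DecidableEq m]
  [DecidableEq n]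

theorem toEuclideanLin_mul (A : Matrix l m 𝕜) (B : Matrix m n 𝕜) :
    toEuclideanLin (A * B) = toEuclideanLin A ∘ₗ toEuclideanLin B := by
  simp only [toEuclideanLin_eq_toLin_orthonormal]
  exact toLin_mul _ _ _ A B

theorem toEuclideanLin_one : toEuclideanLin (1 : Matrix n n 𝕜) = 1 := by
  rw [toEuclideanLin_eq_toLin_orthonormal, toLin_one, Module.End.one_eq_id]

theorem toEuclideanLin_transpose_eq_adjoint (A : Matrix m n ℝ) :
    toEuclideanLin Aᵀ = LinearMap.adjoint (toEuclideanLin A) := by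
  rw [← conjTranspose_eq_transpose_of_trivial, toEuclideanLin_conjTranspose_eq_adjoint]

end Matrix

def SimpleGraph.Arc.rev_s12 {G : SimpleGraph V} [DecidableRel G.Adj] (a : G.Arc) : G.Arc :=
  ⟨(a.1.2, a.1.1), a.2.symm⟩

omit [Fintype V] [DecidableEq V] in
theorem SimpleGraph.Arc.rev_rev_s12 {G : SimpleGraph V} [DecidableRel G.Adj] (a : G.Arc) :
    a.rev_s12.rev_s12 = a :=
  rfl

omit [Fintype V] [DecidableEq V] in
theorem SimpleGraph.Arc.eq_rev_comm {G : SimpleGraph V} [DecidableRel G.Adj] {a b : G.Arc} :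
    a = b.rev_s12 ↔ b = a.rev_s12 :=
  ⟨fun h => h ▸ rfl, fun h => h ▸ rfl⟩

section Smat

variable (G : SimpleGraph V) [DecidableRel G.Adj]

omit [Fintype V] in
theorem Smat_apply (a b : G.Arc) : Smat G a b = if b = a.rev_s12 then 1 else 0 := by
  simp only [Smat, SimpleGraph.Arc.rev_s12, Subtype.ext_iff]

omit [Fintype V] in
theorem Smat_transpose : (Smat G)ᵀ = Smat G := by
  ext a b
  simp only [transpose_apply, Smat_apply, SimpleGraph.Arc.eq_rev_comm]

theorem Smat_mul_self : Smat G * Smat G = 1 := by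
  ext a c
  rw [mul_apply, Finset.sum_eq_single a.rev_s12 (fun b _ hb => by simp [Smat_apply, hb])
    (by simp), Smat_apply, Smat_apply, if_pos rfl, one_mul, SimpleGraph.Arc.rev_rev_s12, one_apply]
  exact if_congr eq_comm rfl rfl

theorem isSymmetric_toEuclideanLin_Smat : (toEuclideanLin (Smat G)).IsSymmetric := by
  rw [isSymmetric_toEuclideanLin_iff, isHermitian_iff_isSymm]
  exact Smat_transpose G

theorem toEuclideanLin_Smat_mul_self :
    toEuclideanLin (Smat G) * toEuclideanLin (Smat G) = 1 := by
  rw [Module.End.mul_eq_comp, ← toEuclideanLin_mul, Smat_mul_self, toEuclideanLin_one]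

end Smat

theorem calL_perp_decomposition_general (G : SimpleGraph V) [DecidableRel G.Adj] (dt : V → ℕ) :
    let K := Matrix.toEuclideanLin (Kmat G dt)
    let E := Matrix.toEuclideanLin
      (Smat G * ((2 : ℝ) • ((Kmat G dt).transpose * Kmat G dt) - 1))
    let L := LinearMap.range (Matrix.toEuclideanLin (Kmat G dt).transpose) ⊔
      LinearMap.range (Matrix.toEuclideanLin (Smat G * (Kmat G dt).transpose))
    Lᗮ = (LinearMap.ker (Matrix.toEuclideanLin (Smat G + 1)) ⊓ LinearMap.ker K) ⊔
        (LinearMap.ker (Matrix.toEuclideanLin (Smat G - 1)) ⊓ LinearMap.ker K) ∧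
    (∀ ψ, ψ ∈ LinearMap.ker (Matrix.toEuclideanLin (Smat G + 1)) ⊓ LinearMap.ker K →
      E ψ = ψ) ∧
    (∀ ψ, ψ ∈ LinearMap.ker (Matrix.toEuclideanLin (Smat G - 1)) ⊓ LinearMap.ker K →
      E ψ = -ψ) ∧
    Submodule.map E Lᗮ = Lᗮ ∧
    (∀ ψ ∈ Lᗮ, E (E ψ) = ψ) ∧
    (∀ ψ ∈ Lᗮ, ∀ φ ∈ Lᗮ, inner ℝ (E ψ) φ = (inner ℝ ψ (E φ) : ℝ)) := by
  intro K E L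
  set S := Matrix.toEuclideanLin (Smat G)
  have hS : S.IsSymmetric := isSymmetric_toEuclideanLin_Smat G
  have hSS : S * S = 1 := toEuclideanLin_Smat_mul_self G
  have hL : Lᗮ = LinearMap.ker K ⊓ LinearMap.ker (K ∘ₗ S) := by
    simpa only [L, Matrix.toEuclideanLin_transpose_eq_adjoint, Matrix.toEuclideanLin_mul] using
      LinearMap.orthogonal_range_adjoint_sup_range_comp_adjoint K hS
  have hE : ∀ ψ, K ψ = 0 → E ψ = -S ψ := fun ψ hψ => by
    simp only [E, Matrix.toEuclideanLin_mul, map_sub, map_smul, Matrix.toEuclideanLin_one,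
      Matrix.toEuclideanLin_transpose_eq_adjoint]
    exact LinearMap.comp_smul_comp_sub_one_apply_of_apply_eq_zero _ _ _ hψ
  rw [map_add, map_sub, Matrix.toEuclideanLin_one, hL]
  set W := LinearMap.ker K ⊓ LinearMap.ker (K ∘ₗ S)
  have hSW : ∀ ψ ∈ W, S ψ ∈ W := fun _ => LinearMap.apply_mem_ker_inf_ker_comp K hSS
  have hEE : ∀ ψ ∈ W, E (E ψ) = ψ := fun ψ hψ => by
    rw [hE ψ hψ.1, map_neg, hE _ (hSW ψ hψ).1, neg_neg, ← Module.End.mul_apply, hSS,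
      Module.End.one_apply]
  refine ⟨LinearMap.ker_inf_ker_comp_eq_sup_eigen K hSS, ?_, ?_, ?_, hEE, ?_⟩
  · rintro ψ ⟨hSψ, hKψ⟩
    rw [hE ψ hKψ, LinearMap.apply_eq_neg_of_mem_ker_add_one hSψ, neg_neg]
  · rintro ψ ⟨hSψ, hKψ⟩
    rw [hE ψ hKψ, LinearMap.apply_eq_self_of_mem_ker_sub_one hSψ]
  · refine Submodule.map_eq_self_of_involutive (fun ψ hψ => ?_) hEE
    rw [hE ψ hψ.1]
    exact neg_mem (hSW ψ hψ)
  · intro ψ hψ φ hφ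
    rw [hE ψ hψ.1, hE φ hφ.1, inner_neg_left, inner_neg_right, hS]

/-- The orthogonal complement of `ℒ = ran Kᵀ + ran SKᵀ` is
`(ker(S+1) ∩ ker K) ⊕ (ker(S−1) ∩ ker K)`; the evolution `E = S(2KᵀK − 1)` acts as
`+1` on the first summand and `−1` on the second, so `ℒ^⊥` is `E`-invariant and
`E` restricted to `ℒ^⊥` is a self-adjoint unitary (an involution). -/
theorem calL_perp_decomposition (G : SimpleGraph V) [DecidableRel G.Adj] (dt : V → ℕ)
    (hconn : G.Connected) (hle : ∀ u, G.degree u ≤ dt u) (hbd : ∃ u, G.degree u < dt u) :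
    let K := Matrix.toEuclideanLin (Kmat G dt)
    let E := Matrix.toEuclideanLin
      (Smat G * ((2 : ℝ) • ((Kmat G dt).transpose * Kmat G dt) - 1))
    let L := LinearMap.range (Matrix.toEuclideanLin (Kmat G dt).transpose) ⊔
      LinearMap.range (Matrix.toEuclideanLin (Smat G * (Kmat G dt).transpose))
    Lᗮ = (LinearMap.ker (Matrix.toEuclideanLin (Smat G + 1)) ⊓ LinearMap.ker K) ⊔
        (LinearMap.ker (Matrix.toEuclideanLin (Smat G - 1)) ⊓ LinearMap.ker K) ∧
    (∀ ψ, ψ ∈ LinearMap.ker (Matrix.toEuclideanLin (Smat G + 1)) ⊓ LinearMap.ker K →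
      E ψ = ψ) ∧
    (∀ ψ, ψ ∈ LinearMap.ker (Matrix.toEuclideanLin (Smat G - 1)) ⊓ LinearMap.ker K →
      E ψ = -ψ) ∧
    Submodule.map E Lᗮ = Lᗮ ∧
    (∀ ψ ∈ Lᗮ, E (E ψ) = ψ) ∧
    (∀ ψ ∈ Lᗮ, ∀ φ ∈ Lᗮ, inner ℝ (E ψ) φ = (inner ℝ ψ (E φ) : ℝ)) :=
  calL_perp_decomposition_general G dt
end

section
/- Let T be the matrix T_{u,v} = 1/√(d̃(u)d̃(v)) for adjacent u,v in a finite connected graph G₀ (0 otherwise), and D the diagonal matrix with entries d(u)/d̃(u), where d̃(u) ≥ d(u) with strict inequality on a nonempty set δV. Then ker(T − D) is one-dimensional, spanned by the vector u ↦ √(d̃(u)). -/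
open Matrix

variable {V : Type*} [Fintype V] [DecidableEq V]

set_option linter.unusedSectionVars false

lemma max_principle (G : SimpleGraph V) [DecidableRel G.Adj] (g : V → ℝ)
    (hh : ∀ u, ∑ v ∈ G.neighborFinset u, g v = G.degree u * g u)
    (u₀ : V) (hmax : ∀ v, g v ≤ g u₀) {a b : V} (p : G.Walk a b) (ha : g a = g u₀) :
    g b = g u₀ := by
  induction p with
  | nil => exact ha
  | @cons a c b h p ih =>
    apply ih
    by_contra hc
    have hlt : g c < g u₀ := lt_of_le_of_ne (hmax _) hc
    have hstrict : ∑ v ∈ G.neighborFinset a, g v < ∑ v ∈ G.neighborFinset a, g u₀ :=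
      Finset.sum_lt_sum (fun v _ => hmax v) ⟨c, by simpa using h, hlt⟩
    rw [hh a, Finset.sum_const, SimpleGraph.card_neighborFinset_eq_degree, ha,
      nsmul_eq_mul] at hstrict
    exact lt_irrefl _ hstrict

lemma harmonic_const (G : SimpleGraph V) [DecidableRel G.Adj] (hconn : G.Connected)
    (g : V → ℝ) (hh : ∀ u, ∑ v ∈ G.neighborFinset u, g v = G.degree u * g u) :
    ∃ u₀, ∀ v, g v = g u₀ := by
  have hne : (Finset.univ : Finset V).Nonempty := by
    have := hconn.nonempty
    exact Finset.univ_nonempty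
  obtain ⟨u₀, -, hmax⟩ := Finset.exists_max_image Finset.univ g hne
  refine ⟨u₀, fun v => ?_⟩
  obtain ⟨p⟩ := hconn u₀ v
  exact max_principle G g hh u₀ (fun v => hmax v (Finset.mem_univ v)) p rfl

lemma key (G : SimpleGraph V) [DecidableRel G.Adj] (dt : V → ℕ) (x : V → ℝ) (u : V) :
    (Tmat G dt - Dmat G dt).mulVec x u
      = (∑ v ∈ G.neighborFinset u,
          x v / (Real.sqrt (dt u) * Real.sqrt (dt v)))
        - ((G.degree u : ℝ) / (dt u)) * x u := by
  rw [sub_mulVec]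
  simp only [Pi.sub_apply, Dmat, mulVec_diagonal]
  congr 1
  simp only [Tmat, mulVec, dotProduct, ite_mul, zero_mul]
  rw [Finset.sum_ite, Finset.sum_const_zero, add_zero]
  rw [SimpleGraph.neighborFinset_eq_filter]
  apply Finset.sum_congr rfl
  intro v hv
  rw [Real.sqrt_mul (by positivity)]
  rw [one_div, div_eq_mul_inv, mul_comm]

/-- For a finite connected graph with `d̃ ≥ d`, strict on a nonempty boundary,
`ker (T − D)` is one-dimensional, spanned by `u ↦ √(d̃ u)`. -/
theorem ker_T_sub_D (G : SimpleGraph V) [DecidableRel G.Adj] (dt : V → ℕ)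
    (hconn : G.Connected) (hle : ∀ u, G.degree u ≤ dt u) (hbd : ∃ u, G.degree u < dt u) :
    LinearMap.ker (Matrix.mulVecLin (Tmat G dt - Dmat G dt))
      = Submodule.span ℝ {fun u => Real.sqrt (dt u)} := by
  -- positivity of dt
  have hdt : ∀ u, 0 < dt u := by
    intro u
    obtain ⟨w, hw⟩ := hbd
    rcases eq_or_ne u w with rfl | h
    · exact lt_of_le_of_lt (Nat.zero_le _) hw
    · have hdeg : 0 < G.degree u := by
        rw [G.degree_pos_iff_exists_adj]
        obtain ⟨p⟩ := hconn u w
        cases p with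
        | nil => exact absurd rfl h
        | cons hadj _ => exact ⟨_, hadj⟩
      exact hdeg.trans_le (hle u)
  set s : V → ℝ := fun u => Real.sqrt (dt u) with hs_def
  have hs : ∀ u, 0 < s u := fun u => Real.sqrt_pos.mpr (by exact_mod_cast hdt u)
  have hss : ∀ u, s u * s u = dt u := fun u => Real.mul_self_sqrt (by positivity)
  apply le_antisymm
  · -- ker ≤ span
    intro x hx
    rw [LinearMap.mem_ker] at hx
    set g : V → ℝ := fun u => x u / s u with hg_def
    have hxg : ∀ u, x u = g u * s u := fun u => by
      show x u = x u / s u * s u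
      rw [div_mul_cancel₀ _ (hs u).ne']
    have hharm : ∀ u, ∑ v ∈ G.neighborFinset u, g v = G.degree u * g u := by
      intro u
      have h0 : (Tmat G dt - Dmat G dt).mulVec x u = 0 := by
        rw [show (Tmat G dt - Dmat G dt).mulVec x = 0 from hx]; rfl
      rw [key] at h0
      have h1 : ∑ v ∈ G.neighborFinset u, x v / (s u * s v)
          = ((G.degree u : ℝ) / (dt u)) * x u := by linarith
      have h2 : ∑ v ∈ G.neighborFinset u, x v / (s u * s v)
          = (∑ v ∈ G.neighborFinset u, g v) / s u := by
        rw [Finset.sum_div]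
        apply Finset.sum_congr rfl
        intro v _
        rw [hxg v, mul_comm (s u) (s v), ← div_div,
          mul_div_cancel_right₀ _ (hs v).ne']
      have hsu := (hs u).ne'
      rw [h2, hxg u, div_eq_iff hsu] at h1
      rw [h1, ← hss u]
      field_simp
    obtain ⟨u₀, hconst⟩ := harmonic_const G hconn g hharm
    rw [Submodule.mem_span_singleton]
    refine ⟨g u₀, funext fun u => ?_⟩
    simp only [Pi.smul_apply, smul_eq_mul]
    rw [hxg u, hconst u]
  · -- span ≤ ker
    rw [Submodule.span_le, Set.singleton_subset_iff]
    rw [SetLike.mem_coe, LinearMap.mem_ker]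
    ext u
    rw [mulVecLin_apply, key]
    have h1 : ∑ v ∈ G.neighborFinset u, s v / (s u * s v)
        = (G.degree u : ℝ) / s u := by
      rw [Finset.sum_congr rfl (fun v _ => by
        rw [div_mul_eq_div_div_swap, div_self (hs v).ne', ]
        )]
      · rw [Finset.sum_const, SimpleGraph.card_neighborFinset_eq_degree, nsmul_eq_mul,
          mul_one_div]
    have h2 : ((G.degree u : ℝ) / (dt u)) * s u = (G.degree u : ℝ) / s u := by
      rw [← hss u, ← div_div, div_mul_cancel₀ _ (hs u).ne']
    simp only [Pi.zero_apply]
    rw [h1, h2, sub_self]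
end
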